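/- For every graph G, ker(G) ⊆ core(G); that is, every vertex belonging to all critical independent sets belongs to every maximum independent set. -/
import Mathlib


open Finset

open scoped Classical

variable {V : Type*}

/-- The neighborhood `N(X)` of a set of vertices `X`. -/
noncomputable def nbhd [Fintype V] (G : SimpleGraph V) (X : Finset V) : Finset V :=
  Finset.univ.filter (fun v => ∃ x ∈ X, G.Adj v x)

/-- The difference `d(X) = |X| - |N(X)|`. -/
noncomputable def diffd [Fintype V] (G : SimpleGraph V) (X : Finset V) : ℤ :=
  (X.card : ℤ) - ((nbhd G X).card : ℤ)

/-- The critical difference `d_c(G) = max{d(X) : X ⊆ V}`. -/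
noncomputable def critDiff [Fintype V] (G : SimpleGraph V) : ℤ :=
  Finset.univ.powerset.sup' ⟨∅, Finset.empty_mem_powerset _⟩ (diffd G)

/-- A set of vertices is independent if no two of its vertices are adjacent. -/
def IsIndep [Fintype V] (G : SimpleGraph V) (A : Finset V) : Prop :=
  ∀ a ∈ A, ∀ b ∈ A, ¬ G.Adj a b

/-- A critical independent set: independent with `d(A) = d_c(G)`. -/
def IsCritIndep [Fintype V] (G : SimpleGraph V) (A : Finset V) : Prop :=
  IsIndep G A ∧ diffd G A = critDiff G

/-- The independence number `α(G)`. -/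
noncomputable def indepNum [Fintype V] (G : SimpleGraph V) : ℕ :=
  (Finset.univ.powerset.filter (fun A => IsIndep G A)).sup Finset.card

/-- The independence number of the induced subgraph `G[X]`,
realized as the largest independent set contained in `X`. -/
noncomputable def indepNumOn [Fintype V] (G : SimpleGraph V) (X : Finset V) : ℕ :=
  (X.powerset.filter (fun A => IsIndep G A)).sup Finset.card

/-- A matching: a set of edges of `G`, pairwise vertex-disjoint. -/
def IsMatchingSet [Fintype V] (G : SimpleGraph V) (M : Finset (Sym2 V)) : Prop :=
  (∀ e ∈ M, e ∈ G.edgeSet) ∧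
  (∀ e ∈ M, ∀ f ∈ M, e ≠ f → ∀ v : V, v ∈ e → v ∉ f)

/-- The matching number `μ(G)`. -/
noncomputable def matchNum [Fintype V] (G : SimpleGraph V) : ℕ :=
  ((Finset.univ : Finset (Sym2 V)).powerset.filter (fun M => IsMatchingSet G M)).sup Finset.card

/-- The matching number of the induced subgraph `G[X]`, realized as the
largest matching of `G` all of whose edges have both endpoints in `X`. -/
noncomputable def matchNumOn [Fintype V] (G : SimpleGraph V) (X : Finset V) : ℕ :=
  ((Finset.univ : Finset (Sym2 V)).powerset.filter
    (fun M => IsMatchingSet G M ∧ ∀ e ∈ M, ∀ v ∈ e, v ∈ X)).sup Finset.card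

/-- `ker(G)`: the intersection of all critical independent sets. -/
noncomputable def kerG [Fintype V] (G : SimpleGraph V) : Finset V :=
  Finset.univ.filter (fun v => ∀ A : Finset V, IsCritIndep G A → v ∈ A)

/-- A maximum independent set, i.e. a member of `Ω(G)`. -/
def IsMaxIndep [Fintype V] (G : SimpleGraph V) (S : Finset V) : Prop :=
  IsIndep G S ∧ S.card = indepNum G

/-- `core(G)`: the intersection of all maximum independent sets. -/
noncomputable def coreG [Fintype V] (G : SimpleGraph V) : Finset V :=
  Finset.univ.filter (fun v => ∀ S : Finset V, IsMaxIndep G S → v ∈ S)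

/-- `corona(G)`: the union of all maximum independent sets. -/
noncomputable def coronaG [Fintype V] (G : SimpleGraph V) : Finset V :=
  Finset.univ.filter (fun v => ∃ S : Finset V, IsMaxIndep G S ∧ v ∈ S)

/-- `G` has no isolated vertices. -/
def NoIsolated (G : SimpleGraph V) : Prop := ∀ v : V, ∃ w, G.Adj v w

lemma mem_nbhd' [Fintype V] (G : SimpleGraph V) (X : Finset V) (v : V) :
    v ∈ nbhd G X ↔ ∃ x ∈ X, G.Adj v x := by
  simp [nbhd]

lemma nbhd_mono' [Fintype V] (G : SimpleGraph V) {X Y : Finset V} (h : X ⊆ Y) :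
    nbhd G X ⊆ nbhd G Y := by
  intro v hv
  rw [mem_nbhd'] at hv ⊢
  obtain ⟨x, hx, hadj⟩ := hv
  exact ⟨x, h hx, hadj⟩

lemma diffd_le_critDiff' [Fintype V] (G : SimpleGraph V) (X : Finset V) :
    diffd G X ≤ critDiff G :=
  Finset.le_sup' (diffd G) (Finset.mem_powerset.mpr (Finset.subset_univ X))

lemma card_le_indepNum' [Fintype V] (G : SimpleGraph V) {T : Finset V}
    (h : IsIndep G T) : T.card ≤ indepNum G :=
  Finset.le_sup (Finset.mem_filter.mpr ⟨Finset.mem_powerset.mpr (Finset.subset_univ T), h⟩)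

lemma exists_critIndep' [Fintype V] (G : SimpleGraph V) : ∃ A, IsCritIndep G A := by
  obtain ⟨X, -, hXeq⟩ := Finset.exists_mem_eq_sup' (s := Finset.univ.powerset)
    ⟨∅, Finset.empty_mem_powerset _⟩ (diffd G)
  set I := X \ nbhd G X with hI
  have hIindep : IsIndep G I := by
    intro a ha b hb hadj
    rw [hI, Finset.mem_sdiff] at ha hb
    exact ha.2 ((mem_nbhd' G X a).mpr ⟨b, hb.1, hadj⟩)
  have hsub : nbhd G I ⊆ nbhd G X \ (X ∩ nbhd G X) := by
    intro v hv
    rw [Finset.mem_sdiff]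
    refine ⟨nbhd_mono' G (Finset.sdiff_subset) hv, ?_⟩
    intro hvX
    rw [mem_nbhd'] at hv
    obtain ⟨i, hi, hadj⟩ := hv
    rw [hI, Finset.mem_sdiff] at hi
    exact hi.2 ((mem_nbhd' G X i).mpr ⟨v, (Finset.mem_inter.mp hvX).1, hadj.symm⟩)
  have hcard1 : I.card + (X ∩ nbhd G X).card = X.card := by
    rw [hI]
    exact Finset.card_sdiff_add_card_inter X (nbhd G X)
  have hcard2 : (nbhd G I).card + (X ∩ nbhd G X).card ≤ (nbhd G X).card := by
    have h1 := Finset.card_le_card hsub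
    have h2 : (X ∩ nbhd G X).card ≤ (nbhd G X).card :=
      Finset.card_le_card (Finset.inter_subset_right)
    rw [Finset.card_sdiff_of_subset (Finset.inter_subset_right)] at h1
    omega
  have hge : diffd G X ≤ diffd G I := by
    unfold diffd
    have := hcard1
    have := hcard2
    omega
  refine ⟨I, hIindep, le_antisymm (diffd_le_critDiff' G I) ?_⟩
  calc critDiff G = diffd G X := hXeq
    _ ≤ diffd G I := hge

lemma inter_critIndep [Fintype V] (G : SimpleGraph V) {A S : Finset V}
    (hA : IsCritIndep G A) (hS : IsMaxIndep G S) : IsCritIndep G (A ∩ S) := by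
  obtain ⟨hAind, hAd⟩ := hA
  obtain ⟨hSind, hScard⟩ := hS
  set X := A \ S with hX
  set S' := X ∪ (S \ nbhd G X) with hS'
  have hXS : Disjoint X S := Finset.sdiff_disjoint
  have hS'ind : IsIndep G S' := by
    intro a ha b hb hadj
    rw [hS', Finset.mem_union] at ha hb
    have hXind : ∀ x ∈ X, ∀ y ∈ X, ¬ G.Adj x y := fun x hx y hy =>
      hAind x (Finset.sdiff_subset hx) y (Finset.sdiff_subset hy)
    rcases ha with ha | ha <;> rcases hb with hb | hb
    · exact hXind a ha b hb hadj
    · rw [Finset.mem_sdiff] at hb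
      exact hb.2 ((mem_nbhd' G X b).mpr ⟨a, ha, hadj.symm⟩)
    · rw [Finset.mem_sdiff] at ha
      exact ha.2 ((mem_nbhd' G X a).mpr ⟨b, hb, hadj⟩)
    · exact hSind a (Finset.sdiff_subset ha) b (Finset.sdiff_subset hb) hadj
  have hS'card : S'.card = X.card + (S \ nbhd G X).card := by
    rw [hS']
    exact Finset.card_union_of_disjoint
      (hXS.mono_right (Finset.sdiff_subset))
  have hSsplit : (S \ nbhd G X).card + (S ∩ nbhd G X).card = S.card :=
    Finset.card_sdiff_add_card_inter S (nbhd G X)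
  have hle : S'.card ≤ S.card := by
    rw [hScard]; exact card_le_indepNum' G hS'ind
  have hstar : X.card ≤ (S ∩ nbhd G X).card := by omega
  -- disjointness of N(A∩S) and S∩N(X)
  have hdisj : Disjoint (nbhd G (A ∩ S)) (S ∩ nbhd G X) := by
    rw [Finset.disjoint_left]
    intro v hv1 hv2
    rw [mem_nbhd'] at hv1
    obtain ⟨a, ha, hadj⟩ := hv1
    exact hSind v (Finset.mem_inter.mp hv2).1 a (Finset.mem_inter.mp ha).2 hadj
  have hsubN : nbhd G (A ∩ S) ∪ (S ∩ nbhd G X) ⊆ nbhd G A := by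
    apply Finset.union_subset
    · exact nbhd_mono' G (Finset.inter_subset_left)
    · exact (Finset.inter_subset_right).trans (nbhd_mono' G (Finset.sdiff_subset))
  have hN : (nbhd G (A ∩ S)).card + (S ∩ nbhd G X).card ≤ (nbhd G A).card := by
    rw [← Finset.card_union_of_disjoint hdisj]
    exact Finset.card_le_card hsubN
  have hAsplit : (A ∩ S).card + X.card = A.card :=
    Finset.card_inter_add_card_sdiff A S
  have hge : critDiff G ≤ diffd G (A ∩ S) := by
    rw [← hAd]
    unfold diffd
    omega
  exact ⟨fun a ha b hb => hAind a (Finset.inter_subset_left ha) b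
    (Finset.inter_subset_left hb), le_antisymm (diffd_le_critDiff' G _) hge⟩

/-- `ker(G) ⊆ core(G)`. -/
theorem stmt_7 {V : Type*} [Fintype V] (G : SimpleGraph V) (hiso : NoIsolated G) :
    kerG G ⊆ coreG G := by
  intro v hv
  rw [kerG, Finset.mem_filter] at hv
  rw [coreG, Finset.mem_filter]
  refine ⟨Finset.mem_univ v, fun S hS => ?_⟩
  obtain ⟨A, hA⟩ := exists_critIndep' G
  have := hv.2 (A ∩ S) (inter_critIndep G hA hS)
  exact (Finset.mem_inter.mp this).2
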